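/- For every minimum-cover instance (S, C₁,…,C_n, K) and all reals α, β > 0, the constructed instance for sacrificing return for less volatility satisfies: there exist at most K of the sets C₁,…,C_n whose union is S if and only if there exists a subset T ⊆ {1,…,m} with |T| = k that meets both the performance bound and the volatility bound. -/

import Mathlib

/-!
Write `v = B - 1` and `D = ⌊B / α⌋`. Relative to time `0`, the market index is `1 / B` at odd and
`D / B` at even padding times and `D / B` on every coding column, while a portfolio of `k` coding
rows stays at `1` on the padding and, on coding column `j`, equals the number of its sets that
contain `e_j`. As `α D ≤ B`, a cover padded to `k` rows meets the performance bound. Its returns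
vanish on the padding and are at most `log k` in absolute value on the `s` coding columns, whereas
the market returns alternate between `log D` and `-log D` on the padding, with
`log D ≥ q log k ≥ (4 / β) log k`: this gives the volatility bound. Conversely, since
`(k - 1) B < k α D`, a portfolio with a non-coding row has to contain the padding row `n + i` to
keep up with the market at time `2 i`, for every `i ≤ k + 1`, which is impossible with `k` rows; and a
portfolio of coding rows that keeps up with the market on every coding column covers `S`.
-/

/-- Price-weighted index of the set of stocks `T` at time `t`,
given prices `Sp`. -/
noncomputable def phi1 (Sp : ℕ → ℕ → ℝ) (T : Finset ℕ) (t : ℕ) : ℝ :=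
  (∑ i ∈ T, Sp i t) / T.card

/-- One-period return of the set of stocks `T` at time `t ≥ 1`. -/
noncomputable def ret (Sp : ℕ → ℕ → ℝ) (T : Finset ℕ) (t : ℕ) : ℝ :=
  Real.log (phi1 Sp T t / phi1 Sp T (t - 1))

/-- Average return of the set of stocks `T` up to time `t ≥ 1`. -/
noncomputable def avgRet (Sp : ℕ → ℕ → ℝ) (T : Finset ℕ) (t : ℕ) : ℝ :=
  (∑ i ∈ Finset.Icc 1 t, ret Sp T i) / t

/-- Volatility of the set of stocks `T` up to time `t ≥ 2`. -/
noncomputable def vol (Sp : ℕ → ℕ → ℝ) (T : Finset ℕ) (t : ℕ) : ℝ :=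
  Real.sqrt ((∑ i ∈ Finset.Icc 1 t, (ret Sp T i - avgRet Sp T t) ^ 2) /
    ((t : ℝ) - 1))

open Finset Real

lemma sum_sq_sub_mean_le_sum_sq {ι : Type*} (s : Finset ι) (x : ι → ℝ) :
    ∑ i ∈ s, (x i - (∑ j ∈ s, x j) / #s) ^ 2 ≤ ∑ i ∈ s, x i ^ 2 := by
  rcases s.eq_empty_or_nonempty with rfl | hs
  · simp
  have hc : (0 : ℝ) < #s := by exact_mod_cast hs.card_pos
  set μ := (∑ j ∈ s, x j) / #s
  have hsum : ∑ j ∈ s, x j = #s * μ := (mul_div_cancel₀ _ hc.ne').symm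
  have hexp : ∑ i ∈ s, (x i - μ) ^ 2 = ∑ i ∈ s, x i ^ 2 - #s * μ ^ 2 := by
    simp only [sub_sq, sum_add_distrib, sum_sub_distrib, ← sum_mul, ← mul_sum, hsum, sum_const,
      nsmul_eq_mul]
    ring
  nlinarith [sq_nonneg μ]

lemma vol_le_mul_vol {Sp : ℕ → ℕ → ℝ} {T M : Finset ℕ} {t : ℕ} {β : ℝ} (hβ : 0 ≤ β)
    (ht : 1 ≤ t)
    (h : ∑ i ∈ Icc 1 t, ret Sp T i ^ 2 ≤
      β ^ 2 * ∑ i ∈ Icc 1 t, (ret Sp M i - avgRet Sp M t) ^ 2) :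
    vol Sp T t ≤ β * vol Sp M t := by
  have hdev : ∑ i ∈ Icc 1 t, (ret Sp T i - avgRet Sp T t) ^ 2 ≤ ∑ i ∈ Icc 1 t, ret Sp T i ^ 2 := by
    simpa [avgRet] using sum_sq_sub_mean_le_sum_sq (Icc 1 t) (ret Sp T)
  have ht' : (0 : ℝ) ≤ t - 1 := sub_nonneg.2 (by exact_mod_cast ht)
  rw [vol, vol, ← sqrt_sq hβ, ← sqrt_mul (sq_nonneg β), mul_div_assoc']
  exact sqrt_le_sqrt (div_le_div_of_nonneg_right (hdev.trans h) ht')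

lemma two_mul_sq_le_sum_sq_sub {ρ : ℕ → ℝ} {a μ : ℝ} {N t : ℕ}
    (hρ : ∀ i ∈ Icc 1 N, ρ (2 * i) = a ∧ ρ (2 * i + 1) = -a) (ht : 2 * N + 1 ≤ t) :
    2 * N * a ^ 2 ≤ ∑ j ∈ Icc 1 t, (ρ j - μ) ^ 2 := by
  have hdisj : Disjoint ((Icc 1 N).image (2 * ·)) ((Icc 1 N).image (2 * · + 1)) := by
    simp only [disjoint_left, mem_image]
    omega
  have hsub : (Icc 1 N).image (2 * ·) ∪ (Icc 1 N).image (2 * · + 1) ⊆ Icc 1 t := by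
    intro j hj
    rcases mem_union.1 hj with hj | hj <;> obtain ⟨i, hi, rfl⟩ := mem_image.1 hj <;>
      simp only [mem_Icc] at hi ⊢ <;> omega
  calc 2 * N * a ^ 2 = ∑ _i ∈ Icc 1 N, 2 * a ^ 2 := by simp; ring
    _ ≤ ∑ i ∈ Icc 1 N, ((ρ (2 * i) - μ) ^ 2 + (ρ (2 * i + 1) - μ) ^ 2) := by
      refine sum_le_sum fun i hi => ?_
      rw [(hρ i hi).1, (hρ i hi).2]
      nlinarith [sq_nonneg μ]
    _ = ∑ j ∈ (Icc 1 N).image (2 * ·) ∪ (Icc 1 N).image (2 * · + 1), (ρ j - μ) ^ 2 := by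
      rw [sum_union hdisj, sum_image (by intro _ _ _ _ h; simpa using h),
        sum_image (by intro _ _ _ _ h; simpa using h), sum_add_distrib]
    _ ≤ ∑ j ∈ Icc 1 t, (ρ j - μ) ^ 2 :=
      sum_le_sum_of_subset_of_nonneg hsub fun _ _ _ => sq_nonneg _

lemma sum_Icc_one_eq_add_sum_Ioc (g : ℕ → ℝ) {a b : ℕ} (h : a ≤ b) :
    ∑ i ∈ Icc 1 b, g i = ∑ i ∈ Icc 1 a, g i + ∑ i ∈ Ioc a b, g i := by
  have hIcc : ∀ x, Icc 1 x = Ioc 0 x := fun x => Icc_add_one_left_eq_Ioc 0 x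
  rw [hIcc, hIcc, sum_Ioc_consecutive _ (Nat.zero_le a) h]

lemma sum_Icc_sq_le {r : ℕ → ℝ} {P s t : ℕ} {b : ℝ} (h0 : ∀ i ∈ Icc 1 P, r i = 0)
    (hb : ∀ i ∈ Ioc P (P + s), |r i| ≤ b) (ht : t ≤ P + s) :
    ∑ i ∈ Icc 1 t, r i ^ 2 ≤ s * b ^ 2 :=
  calc ∑ i ∈ Icc 1 t, r i ^ 2 ≤ ∑ i ∈ Icc 1 (P + s), r i ^ 2 :=
        sum_le_sum_of_subset_of_nonneg (Icc_subset_Icc_right ht) fun _ _ _ => sq_nonneg _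
    _ = ∑ i ∈ Ioc P (P + s), r i ^ 2 := by
        rw [sum_Icc_one_eq_add_sum_Ioc _ (Nat.le_add_right P s),
          sum_eq_zero fun i hi => by rw [h0 i hi]; simp, zero_add]
    _ ≤ ∑ _i ∈ Ioc P (P + s), b ^ 2 :=
        sum_le_sum fun i hi => sq_le_sq' (abs_le.1 (hb i hi)).1 (abs_le.1 (hb i hi)).2
    _ = s * b ^ 2 := by simp

lemma abs_log_div_le_log {x y c K : ℝ} (hc : 0 < c) (hx : x ∈ Set.Icc c (K * c))
    (hy : y ∈ Set.Icc c (K * c)) : |log (x / y)| ≤ log K := by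
  have hx0 : 0 < x := hc.trans_le hx.1
  have hy0 : 0 < y := hc.trans_le hy.1
  have hxy : x / y ≤ K := (div_le_iff₀ hy0).2 (by nlinarith [hx.2, hy.1])
  have hyx : y / x ≤ K := (div_le_iff₀ hx0).2 (by nlinarith [hy.2, hx.1])
  rw [abs_le, neg_le, ← log_inv, inv_div]
  exact ⟨log_le_log (by positivity) hyx, log_le_log (by positivity) hxy⟩

lemma le_pow_of_log_div_log_le {x b : ℝ} {q : ℕ} (hx : 0 < x) (hb : 1 < b)
    (h : log x / log b ≤ q) : x ≤ b ^ q := by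
  rw [← log_le_log_iff hx (by positivity), log_pow]
  exact (div_le_iff₀ (log_pos hb)).1 h

lemma sub_one_mul_lt_mul_floor_div {x α k : ℝ} (hα : 0 < α) (hk : 0 < k) (h : k * α ≤ x) :
    (k - 1) * x < k * (α * ⌊x / α⌋) := by
  have hfl : x - α < α * ⌊x / α⌋ := by
    have := mul_lt_mul_of_pos_left (Int.sub_one_lt_floor (x / α)) hα
    rwa [mul_sub, mul_div_cancel₀ _ hα.ne', mul_one] at this
  nlinarith

lemma reduction_constants {α β : ℝ} {k q B : ℕ} (hα : 0 < α) (hβ : 0 < β) (hk : 2 ≤ k)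
    (hq : (q : ℤ) = ⌈max (1 + 4 / β) (log (2 / α) / log k)⌉) (hB : (B : ℤ) = ⌈α * (k : ℝ) ^ q⌉) :
    1 < B ∧ (1 : ℝ) < ⌊(B : ℝ) / α⌋ ∧ α * ⌊(B : ℝ) / α⌋ ≤ B ∧
      ((k : ℝ) - 1) * B < k * (α * ⌊(B : ℝ) / α⌋) ∧ 4 * log k ≤ β * log ⌊(B : ℝ) / α⌋ := by
  have hkR : (2 : ℝ) ≤ k := by exact_mod_cast hk
  have hq' : max (1 + 4 / β) (log (2 / α) / log k) ≤ q := by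
    exact_mod_cast hq ▸ Int.le_ceil _
  have hB' : α * (k : ℝ) ^ q ≤ B := by exact_mod_cast hB ▸ Int.le_ceil _
  have hq4 : 1 + 4 / β ≤ q := (le_max_left _ _).trans hq'
  have hq1 : 1 ≤ q := by
    exact_mod_cast (show (1 : ℝ) ≤ q by linarith [show (0 : ℝ) < 4 / β by positivity])
  have hkq : 2 / α ≤ (k : ℝ) ^ q :=
    le_pow_of_log_div_log_le (by positivity) (by linarith) ((le_max_right _ _).trans hq')
  have hkk : (k : ℝ) ≤ (k : ℝ) ^ q := le_self_pow₀ (by linarith) (by omega)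
  have hD : (k : ℝ) ^ q ≤ ⌊(B : ℝ) / α⌋ := by
    exact_mod_cast Int.le_floor.2 (by push_cast; rw [le_div_iff₀ hα]; linarith)
  have h2B : (2 : ℝ) ≤ B := by rw [div_le_iff₀ hα] at hkq; linarith
  refine ⟨by exact_mod_cast h2B, by linarith, ?_, ?_, ?_⟩
  · rw [← le_div_iff₀' hα]
    exact Int.floor_le _
  · exact sub_one_mul_lt_mul_floor_div hα (by linarith) (by nlinarith)
  · calc 4 * log k = β * (4 / β * log k) := by field_simp
      _ ≤ β * (q * log k) := by gcongr; linarith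
      _ = β * log ((k : ℝ) ^ q) := by rw [log_pow]
      _ ≤ β * log ⌊(B : ℝ) / α⌋ := by gcongr

lemma phi1_eq_of_forall_eq {Sp : ℕ → ℕ → ℝ} {T : Finset ℕ} {t : ℕ} {c : ℝ} (hT : T.Nonempty)
    (h : ∀ i ∈ T, Sp i t = c) : phi1 Sp T t = c := by
  rw [phi1, sum_eq_card_nsmul h, nsmul_eq_mul,
    mul_div_cancel_left₀ _ (by exact_mod_cast hT.card_pos.ne')]

def PerformanceBound (Sp : ℕ → ℕ → ℝ) (M : Finset ℕ) (α : ℝ) (f : ℕ) (T : Finset ℕ) : Prop :=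
  ∀ t ∈ Icc 1 f, phi1 Sp T t / phi1 Sp T 0 ≥ α * (phi1 Sp M t / phi1 Sp M 0)

def VolatilityBound (Sp : ℕ → ℕ → ℝ) (M : Finset ℕ) (β : ℝ) (f : ℕ) (T : Finset ℕ) : Prop :=
  ∀ t ∈ Icc 2 f, vol Sp T t ≤ β * vol Sp M t

/-- The prices of the reduction from minimum cover, with `v₁ = B - 1`, `v₂ = k (B - 1)` and `D`
standing for `⌊B / α⌋`. -/
structure IsCoverMarket (C : ℕ → Finset ℕ) (s n k P B m : ℕ) (D : ℝ) (Sp : ℕ → ℕ → ℝ) :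
    Prop where
  k_pos : 0 < k
  k_lt_n : k < n
  one_lt_B : 1 < B
  card_eq : m = n * B
  pad_len : P = max (2 * (k + 1)) (2 * s)
  initial : ∀ i ∈ Icc 1 m, Sp i 0 = (B : ℝ) - 1
  coding_pad : ∀ t, 1 ≤ t → t ≤ P → ∀ i ∈ Icc 1 n, Sp i t = (B : ℝ) - 1
  pad_even : ∀ t, 1 ≤ t → t ≤ P → t % 2 = 0 →
    Sp (min (n + t / 2) m) t = ((m : ℝ) - n) * (D - 1) ∧
    ∀ i, n < i → i ≤ m → i ≠ min (n + t / 2) m → Sp i t = 0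
  pad_odd : ∀ t, 1 ≤ t → t ≤ P → t % 2 = 1 → ∀ i, n < i → i ≤ m → Sp i t = 0
  coding : ∀ t, P < t → t ≤ P + s →
    (∀ i ∈ Icc 1 n, Sp i t = if t - P ∈ C i then (k : ℝ) * ((B : ℝ) - 1) else 0) ∧
    (∀ i, n < i → i < m → Sp i t = 0) ∧
    Sp m t = ((m : ℝ) - n) * (D - k) + (#{i ∈ Icc 1 n | t - P ∉ C i} : ℝ) * (k * ((B : ℝ) - 1))

namespace IsCoverMarket

variable {C : ℕ → Finset ℕ} {s n k P B m : ℕ} {D : ℝ} {Sp : ℕ → ℕ → ℝ} {T : Finset ℕ} {t : ℕ}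

lemma add_lt_m (h : IsCoverMarket C s n k P B m D Sp) : n + k < m := by
  have := Nat.mul_le_mul_left n h.one_lt_B
  have := h.k_lt_n
  rw [h.card_eq]; omega

lemma n_lt_m (h : IsCoverMarket C s n k P B m D Sp) : n < m := by
  have := h.add_lt_m; omega

lemma m_sub_n_eq (h : IsCoverMarket C s n k P B m D Sp) : (m : ℝ) - n = n * ((B : ℝ) - 1) := by
  rw [h.card_eq]; push_cast; ring

lemma B_sub_one_pos (h : IsCoverMarket C s n k P B m D Sp) : (0 : ℝ) < (B : ℝ) - 1 := by
  have : (1 : ℝ) < B := by exact_mod_cast h.one_lt_B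
  linarith

lemma phi1_market_of_sum (h : IsCoverMarket C s n k P B m D Sp) {x : ℝ}
    (hsum : ∑ i ∈ Icc 1 m, Sp i t = n * x) : phi1 Sp (Icc 1 m) t = x / B := by
  have hn : (n : ℝ) ≠ 0 := by exact_mod_cast (h.k_pos.trans h.k_lt_n).ne'
  rw [phi1, hsum, Nat.card_Icc, Nat.add_sub_cancel, h.card_eq, Nat.cast_mul,
    mul_div_mul_left _ _ hn]

lemma phi1_market_zero (h : IsCoverMarket C s n k P B m D Sp) :
    phi1 Sp (Icc 1 m) 0 = (B : ℝ) - 1 :=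
  phi1_eq_of_forall_eq (nonempty_Icc.2 (by have := h.n_lt_m; omega)) h.initial

lemma phi1_market_odd (h : IsCoverMarket C s n k P B m D Sp) (ht1 : 1 ≤ t) (ht2 : t ≤ P)
    (ht : t % 2 = 1) : phi1 Sp (Icc 1 m) t = ((B : ℝ) - 1) / B := by
  refine h.phi1_market_of_sum ?_
  rw [sum_Icc_one_eq_add_sum_Ioc _ h.n_lt_m.le, sum_eq_card_nsmul (h.coding_pad t ht1 ht2),
    sum_eq_zero fun i hi => h.pad_odd t ht1 ht2 ht i (mem_Ioc.1 hi).1 (mem_Ioc.1 hi).2]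
  simp

lemma phi1_market_even (h : IsCoverMarket C s n k P B m D Sp) (ht1 : 1 ≤ t) (ht2 : t ≤ P)
    (ht : t % 2 = 0) : phi1 Sp (Icc 1 m) t = ((B : ℝ) - 1) * D / B := by
  obtain ⟨hrow, hzero⟩ := h.pad_even t ht1 ht2 ht
  have hmem : min (n + t / 2) m ∈ Ioc n m := by
    have := h.n_lt_m
    simp only [mem_Ioc]; omega
  refine h.phi1_market_of_sum ?_
  rw [sum_Icc_one_eq_add_sum_Ioc _ h.n_lt_m.le, sum_eq_card_nsmul (h.coding_pad t ht1 ht2),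
    sum_eq_single_of_mem _ hmem fun i hi hne => hzero i (mem_Ioc.1 hi).1 (mem_Ioc.1 hi).2 hne,
    hrow, h.m_sub_n_eq]
  simp only [Nat.card_Icc, Nat.add_sub_cancel, nsmul_eq_mul]
  ring

lemma phi1_market_coding (h : IsCoverMarket C s n k P B m D Sp) {j : ℕ} (hj : j ∈ Icc 1 s) :
    phi1 Sp (Icc 1 m) (P + j) = ((B : ℝ) - 1) * D / B := by
  obtain ⟨hj1, hj2⟩ := mem_Icc.1 hj
  obtain ⟨hrows, hzero, hlast⟩ := h.coding (P + j) (by omega) (by omega)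
  simp only [Nat.add_sub_cancel_left] at hrows hlast
  have hcard : (#{i ∈ Icc 1 n | j ∈ C i} : ℝ) + #{i ∈ Icc 1 n | j ∉ C i} = n := by
    exact_mod_cast (card_filter_add_card_filter_not (s := Icc 1 n) (fun i => j ∈ C i)).trans
      (by simp)
  refine h.phi1_market_of_sum ?_
  rw [sum_Icc_one_eq_add_sum_Ioc _ h.n_lt_m.le, sum_congr rfl hrows, ← sum_filter,
    sum_eq_single_of_mem m (by simp [h.n_lt_m]) fun i hi hne =>
      hzero i (mem_Ioc.1 hi).1 (lt_of_le_of_ne (mem_Ioc.1 hi).2 hne),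
    hlast, h.m_sub_n_eq, sum_const, nsmul_eq_mul]
  linear_combination ((k : ℝ) * ((B : ℝ) - 1)) * hcard

lemma phi1_market_le (h : IsCoverMarket C s n k P B m D Sp) (hD : 1 ≤ D)
    (ht : t ∈ Icc 1 (P + s)) : phi1 Sp (Icc 1 m) t ≤ ((B : ℝ) - 1) * D / B := by
  obtain ⟨ht1, ht2⟩ := mem_Icc.1 ht
  by_cases htP : t ≤ P
  · rcases Nat.mod_two_eq_zero_or_one t with he | ho
    · exact (h.phi1_market_even ht1 htP he).le
    · rw [h.phi1_market_odd ht1 htP ho]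
      gcongr
      exact le_mul_of_one_le_right h.B_sub_one_pos.le hD
  · obtain ⟨j, rfl⟩ : ∃ j, t = P + j := ⟨t - P, by omega⟩
    exact (h.phi1_market_coding (mem_Icc.2 ⟨by omega, by omega⟩)).le

lemma phi1_zero (h : IsCoverMarket C s n k P B m D Sp) (hT : T ⊆ Icc 1 m) (hne : T.Nonempty) :
    phi1 Sp T 0 = (B : ℝ) - 1 :=
  phi1_eq_of_forall_eq hne fun i hi => h.initial i (hT hi)

lemma phi1_of_le_pad (h : IsCoverMarket C s n k P B m D Sp) (hT : T ⊆ Icc 1 n)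
    (hne : T.Nonempty) (ht : t ≤ P) : phi1 Sp T t = (B : ℝ) - 1 := by
  rcases Nat.eq_zero_or_pos t with rfl | ht1
  · exact h.phi1_zero (hT.trans (Icc_subset_Icc_right h.n_lt_m.le)) hne
  · exact phi1_eq_of_forall_eq hne fun i hi => h.coding_pad t ht1 ht i (hT hi)

lemma phi1_coding (h : IsCoverMarket C s n k P B m D Sp) (hT : T ⊆ Icc 1 n) (hTk : #T = k)
    {j : ℕ} (hj : j ∈ Icc 1 s) : phi1 Sp T (P + j) = #{i ∈ T | j ∈ C i} * ((B : ℝ) - 1) := by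
  obtain ⟨hj1, hj2⟩ := mem_Icc.1 hj
  have hrows := (h.coding (P + j) (by omega) (by omega)).1
  simp only [Nat.add_sub_cancel_left] at hrows
  have hk : (k : ℝ) ≠ 0 := by exact_mod_cast h.k_pos.ne'
  rw [phi1, sum_congr rfl fun i hi => hrows i (hT hi), ← sum_filter, sum_const, nsmul_eq_mul,
    hTk]
  field_simp

lemma performance_iff (h : IsCoverMarket C s n k P B m D Sp) (hT : T ⊆ Icc 1 m)
    (hne : T.Nonempty) {α : ℝ} :
    phi1 Sp T t / phi1 Sp T 0 ≥ α * (phi1 Sp (Icc 1 m) t / phi1 Sp (Icc 1 m) 0) ↔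
      α * phi1 Sp (Icc 1 m) t ≤ phi1 Sp T t := by
  rw [h.phi1_zero hT hne, h.phi1_market_zero, ge_iff_le, mul_div_assoc',
    div_le_div_iff_of_pos_right h.B_sub_one_pos]

lemma phi1_mem_Icc_of_cover (h : IsCoverMarket C s n k P B m D Sp) (hT : T ⊆ Icc 1 n)
    (hTk : #T = k) (hcov : ∀ j ∈ Icc 1 s, ∃ i ∈ T, j ∈ C i) (ht : t ≤ P + s) :
    phi1 Sp T t ∈ Set.Icc ((B : ℝ) - 1) (k * ((B : ℝ) - 1)) := by
  have hne : T.Nonempty := card_pos.1 (hTk ▸ h.k_pos)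
  have hk : (1 : ℝ) ≤ k := by exact_mod_cast h.k_pos
  by_cases htP : t ≤ P
  · rw [h.phi1_of_le_pad hT hne htP]
    exact ⟨le_rfl, le_mul_of_one_le_left h.B_sub_one_pos.le hk⟩
  · obtain ⟨j, rfl⟩ : ∃ j, t = P + j := ⟨t - P, by omega⟩
    have hj : j ∈ Icc 1 s := mem_Icc.2 ⟨by omega, by omega⟩
    obtain ⟨i, hiT, hiC⟩ := hcov j hj
    have hc1 : (1 : ℝ) ≤ #{i ∈ T | j ∈ C i} := by
      exact_mod_cast card_pos.2 ⟨i, mem_filter.2 ⟨hiT, hiC⟩⟩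
    have hck : (#{i ∈ T | j ∈ C i} : ℝ) ≤ k := by exact_mod_cast hTk ▸ card_filter_le T _
    rw [h.phi1_coding hT hTk hj]
    exact ⟨le_mul_of_one_le_left h.B_sub_one_pos.le hc1, by gcongr; exact h.B_sub_one_pos.le⟩

lemma performanceBound_of_cover (h : IsCoverMarket C s n k P B m D Sp) (hT : T ⊆ Icc 1 n)
    (hTk : #T = k) (hcov : ∀ j ∈ Icc 1 s, ∃ i ∈ T, j ∈ C i) {α : ℝ} (hα : 0 ≤ α)
    (hD : 1 ≤ D) (hαD : α * D ≤ B) : PerformanceBound Sp (Icc 1 m) α (P + s) T := by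
  have hne : T.Nonempty := card_pos.1 (hTk ▸ h.k_pos)
  have hB : (0 : ℝ) < B := by have := h.B_sub_one_pos; linarith
  intro t ht
  rw [h.performance_iff (hT.trans (Icc_subset_Icc_right h.n_lt_m.le)) hne]
  calc α * phi1 Sp (Icc 1 m) t ≤ α * (((B : ℝ) - 1) * D / B) := by
        gcongr; exact h.phi1_market_le hD ht
    _ ≤ (B : ℝ) - 1 := by
        rw [mul_div_assoc', div_le_iff₀ hB]; nlinarith [h.B_sub_one_pos]
    _ ≤ phi1 Sp T t := (h.phi1_mem_Icc_of_cover hT hTk hcov (mem_Icc.1 ht).2).1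

lemma ret_market_pad (h : IsCoverMarket C s n k P B m D Sp) (hD : 0 < D) {i : ℕ} (hi1 : 1 ≤ i)
    (hi : 2 * i + 1 ≤ P) :
    ret Sp (Icc 1 m) (2 * i) = log D ∧ ret Sp (Icc 1 m) (2 * i + 1) = -log D := by
  have he := h.phi1_market_even (t := 2 * i) (by omega) (by omega) (by omega)
  have ho := h.phi1_market_odd (t := 2 * i - 1) (by omega) (by omega) (by omega)
  have ho' := h.phi1_market_odd (t := 2 * i + 1) (by omega) hi (by omega)
  have hv := h.B_sub_one_pos.ne'
  have hB : (B : ℝ) ≠ 0 := Nat.cast_ne_zero.2 (by have := h.one_lt_B; omega)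
  constructor
  · rw [ret, he, ho]; congr 1; field_simp
  · rw [ret, Nat.add_sub_cancel, ho', he, ← log_inv]; congr 1; field_simp

lemma ret_of_le_pad (h : IsCoverMarket C s n k P B m D Sp) (hT : T ⊆ Icc 1 n)
    (hne : T.Nonempty) (ht : t ≤ P) : ret Sp T t = 0 := by
  rw [ret, h.phi1_of_le_pad hT hne ht, h.phi1_of_le_pad hT hne (by omega),
    div_self h.B_sub_one_pos.ne', log_one]

lemma abs_ret_le_of_cover (h : IsCoverMarket C s n k P B m D Sp) (hT : T ⊆ Icc 1 n)
    (hTk : #T = k) (hcov : ∀ j ∈ Icc 1 s, ∃ i ∈ T, j ∈ C i) (ht : t ≤ P + s) :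
    |ret Sp T t| ≤ log k :=
  abs_log_div_le_log h.B_sub_one_pos (h.phi1_mem_Icc_of_cover hT hTk hcov ht)
    (h.phi1_mem_Icc_of_cover hT hTk hcov (by omega))

lemma volatilityBound_of_cover (h : IsCoverMarket C s n k P B m D Sp) (hT : T ⊆ Icc 1 n)
    (hTk : #T = k) (hcov : ∀ j ∈ Icc 1 s, ∃ i ∈ T, j ∈ C i) {β : ℝ} (hβ : 0 ≤ β) (hD : 1 < D)
    (hβD : 4 * log k ≤ β * log D) : VolatilityBound Sp (Icc 1 m) β (P + s) T := by
  have hne : T.Nonempty := card_pos.1 (hTk ▸ h.k_pos)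
  have hr0 : ∀ i ∈ Icc 1 P, ret Sp T i = 0 := fun i hi =>
    h.ret_of_le_pad hT hne (mem_Icc.1 hi).2
  intro t ht
  obtain ⟨ht2, htf⟩ := mem_Icc.1 ht
  refine vol_le_mul_vol hβ (by omega) ?_
  have hY := sum_nonneg fun i (_ : i ∈ Icc 1 t) =>
    sq_nonneg (ret Sp (Icc 1 m) i - avgRet Sp (Icc 1 m) t)
  by_cases htP : t ≤ P
  · calc ∑ i ∈ Icc 1 t, ret Sp T i ^ 2 ≤ ((0 : ℕ) : ℝ) * log k ^ 2 :=
          sum_Icc_sq_le (s := 0) hr0 (by simp) (by omega)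
      _ ≤ _ := by rw [Nat.cast_zero, zero_mul]; positivity
  · set N := P / 2 - 1
    have hN : 2 * N + 1 ≤ t ∧ s ≤ 2 * N := by
      have := h.pad_len; have := h.k_pos; omega
    have hsN : (s : ℝ) ≤ 2 * N := by exact_mod_cast hN.2
    have hlogk : 0 ≤ log k := log_natCast_nonneg k
    have h16 : 16 * log k ^ 2 ≤ β ^ 2 * log D ^ 2 := by
      nlinarith [pow_le_pow_left₀ (by positivity) hβD 2]
    calc ∑ i ∈ Icc 1 t, ret Sp T i ^ 2 ≤ s * log k ^ 2 :=
          sum_Icc_sq_le hr0 (fun i hi => h.abs_ret_le_of_cover hT hTk hcov (mem_Ioc.1 hi).2) htf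
      _ ≤ β ^ 2 * (2 * N * log D ^ 2) := by
          nlinarith [mul_le_mul_of_nonneg_right hsN (sq_nonneg (log k)),
            mul_le_mul_of_nonneg_left h16 (Nat.cast_nonneg (α := ℝ) N)]
      _ ≤ β ^ 2 * ∑ i ∈ Icc 1 t, (ret Sp (Icc 1 m) i - avgRet Sp (Icc 1 m) t) ^ 2 := by
          gcongr
          refine two_mul_sq_le_sum_sq_sub (fun i hi => ?_) hN.1
          obtain ⟨hi1, hiN⟩ := mem_Icc.1 hi
          exact h.ret_market_pad (by linarith) hi1 (by omega)

lemma exists_portfolio_of_cover (h : IsCoverMarket C s n k P B m D Sp) {α β : ℝ} (hα : 0 ≤ α)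
    (hβ : 0 ≤ β) (hD : 1 < D) (hαD : α * D ≤ B) (hβD : 4 * log k ≤ β * log D) {I : Finset ℕ}
    (hI : I ⊆ Icc 1 n) (hIk : #I ≤ k) (hcov : ∀ j ∈ Icc 1 s, ∃ i ∈ I, j ∈ C i) :
    ∃ T ⊆ Icc 1 m, #T = k ∧ PerformanceBound Sp (Icc 1 m) α (P + s) T ∧
      VolatilityBound Sp (Icc 1 m) β (P + s) T := by
  obtain ⟨T, hIT, hT, hTk⟩ := exists_subsuperset_card_eq hI hIk (by simpa using h.k_lt_n.le)
  have hcovT : ∀ j ∈ Icc 1 s, ∃ i ∈ T, j ∈ C i := fun j hj =>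
    (hcov j hj).imp fun i hi => ⟨hIT hi.1, hi.2⟩
  exact ⟨T, hT.trans (Icc_subset_Icc_right h.n_lt_m.le), hTk,
    h.performanceBound_of_cover hT hTk hcovT hα hD.le hαD,
    h.volatilityBound_of_cover hT hTk hcovT hβ hD hβD⟩

lemma sum_pad_even_of_not_mem (h : IsCoverMarket C s n k P B m D Sp) (hT : T ⊆ Icc 1 m)
    (ht1 : 1 ≤ t) (ht2 : t ≤ P) (ht : t % 2 = 0) (hr : min (n + t / 2) m ∉ T) :
    ∑ i ∈ T, Sp i t = #{i ∈ T | i ≤ n} * ((B : ℝ) - 1) := by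
  have hrow : ∀ i ∈ T, Sp i t = if i ≤ n then (B : ℝ) - 1 else 0 := by
    intro i hi
    obtain ⟨hi1, him⟩ := mem_Icc.1 (hT hi)
    split_ifs with hin
    · exact h.coding_pad t ht1 ht2 i (mem_Icc.2 ⟨hi1, hin⟩)
    · exact (h.pad_even t ht1 ht2 ht).2 i (not_le.1 hin) him (ne_of_mem_of_not_mem hi hr)
  rw [sum_congr rfl hrow, ← sum_filter, sum_const, nsmul_eq_mul]

/-- At time `2i` the adjustment value sits in row `n + i`; a portfolio missing it keeps at most
`k - 1` coding rows, too few to follow the market. -/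
lemma mem_of_performance_at_pad (h : IsCoverMarket C s n k P B m D Sp) (hT : T ⊆ Icc 1 m)
    (hTk : #T = k) (hTn : ¬T ⊆ Icc 1 n) {α : ℝ} (hkey : ((k : ℝ) - 1) * B < k * (α * D))
    {i : ℕ} (hi : i ∈ Icc 1 (k + 1))
    (hperf : phi1 Sp T (2 * i) / phi1 Sp T 0 ≥
      α * (phi1 Sp (Icc 1 m) (2 * i) / phi1 Sp (Icc 1 m) 0)) : n + i ∈ T := by
  obtain ⟨hi1, hik⟩ := mem_Icc.1 hi
  have hP := h.pad_len
  have hmin : min (n + 2 * i / 2) m = n + i := by have := h.add_lt_m; omega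
  have hne : T.Nonempty := card_pos.1 (hTk ▸ h.k_pos)
  by_contra hni
  have hc : #{x ∈ T | x ≤ n} + 1 ≤ k := by
    refine hTk ▸ card_lt_card (filter_ssubset.2 ?_)
    obtain ⟨x, hxT, hxn⟩ := not_subset.1 hTn
    exact ⟨x, hxT, fun hx => hxn (mem_Icc.2 ⟨(mem_Icc.1 (hT hxT)).1, hx⟩)⟩
  have hcR : (#{x ∈ T | x ≤ n} : ℝ) ≤ k - 1 := by
    rw [le_sub_iff_add_le]; exact_mod_cast hc
  have hfollow := (h.performance_iff hT hne).1 hperf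
  rw [h.phi1_market_even (by omega) (by omega) (by omega), phi1,
    h.sum_pad_even_of_not_mem hT (by omega) (by omega) (by omega) (hmin ▸ hni), hTk,
    mul_div_assoc', div_le_div_iff₀ (by have := h.B_sub_one_pos; linarith)
      (by exact_mod_cast h.k_pos)] at hfollow
  have hBv : (0 : ℝ) ≤ B * ((B : ℝ) - 1) := by have := h.B_sub_one_pos; positivity
  nlinarith [mul_lt_mul_of_pos_right hkey h.B_sub_one_pos, mul_le_mul_of_nonneg_right hcR hBv]

lemma subset_coding_of_performance (h : IsCoverMarket C s n k P B m D Sp) (hT : T ⊆ Icc 1 m)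
    (hTk : #T = k) {α : ℝ} (hkey : ((k : ℝ) - 1) * B < k * (α * D))
    (hperf : PerformanceBound Sp (Icc 1 m) α (P + s) T) : T ⊆ Icc 1 n := by
  by_contra hTn
  have hsub : (Icc 1 (k + 1)).image (n + ·) ⊆ T := by
    intro x hx
    obtain ⟨i, hi, rfl⟩ := mem_image.1 hx
    have := h.pad_len
    refine h.mem_of_performance_at_pad hT hTk hTn hkey hi (hperf (2 * i) ?_)
    simp only [mem_Icc] at hi ⊢; omega
  have := card_le_card hsub
  rw [card_image_of_injective _ (add_right_injective n), Nat.card_Icc] at this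
  omega

lemma covers_of_performance (h : IsCoverMarket C s n k P B m D Sp) (hT : T ⊆ Icc 1 n)
    (hTk : #T = k) {α : ℝ} (hαD : 0 < α * D)
    (hperf : PerformanceBound Sp (Icc 1 m) α (P + s) T) : ∀ j ∈ Icc 1 s, ∃ i ∈ T, j ∈ C i := by
  intro j hj
  have hne : T.Nonempty := card_pos.1 (hTk ▸ h.k_pos)
  have hfollow := (h.performance_iff (hT.trans (Icc_subset_Icc_right h.n_lt_m.le)) hne).1
    (hperf (P + j) (mem_Icc.2 ⟨by simp at hj; omega, by simp at hj; omega⟩))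
  rw [h.phi1_market_coding hj, h.phi1_coding hT hTk hj] at hfollow
  have hmarket : 0 < α * (((B : ℝ) - 1) * D / B) := by
    have := h.B_sub_one_pos
    rw [mul_div_assoc', mul_left_comm]
    exact div_pos (mul_pos this hαD) (by linarith)
  obtain ⟨i, hi⟩ := card_pos.1 (by exact_mod_cast
    (mul_pos_iff_of_pos_right h.B_sub_one_pos).1 (hmarket.trans_le hfollow))
  exact ⟨i, (mem_filter.1 hi).1, (mem_filter.1 hi).2⟩

theorem exists_cover_iff (h : IsCoverMarket C s n k P B m D Sp) {α β : ℝ} (hα : 0 < α)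
    (hβ : 0 ≤ β) (hD : 1 < D) (hαD : α * D ≤ B) (hkey : ((k : ℝ) - 1) * B < k * (α * D))
    (hβD : 4 * log k ≤ β * log D) :
    (∃ I ⊆ Icc 1 n, #I ≤ k ∧ ∀ j ∈ Icc 1 s, ∃ i ∈ I, j ∈ C i) ↔
      ∃ T ⊆ Icc 1 m, #T = k ∧ PerformanceBound Sp (Icc 1 m) α (P + s) T ∧
        VolatilityBound Sp (Icc 1 m) β (P + s) T := by
  refine ⟨fun ⟨I, hI, hIk, hcov⟩ => h.exists_portfolio_of_cover hα.le hβ hD hαD hβD hI hIk hcov,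
    fun ⟨T, hT, hTk, hperf, _⟩ => ?_⟩
  have hTn := h.subset_coding_of_performance hT hTk hkey hperf
  exact ⟨T, hTn, hTk.le, h.covers_of_performance hTn hTk (by positivity) hperf⟩

end IsCoverMarket

theorem stmt_8_general
    -- the minimum-cover instance
    (s n K : ℕ) (C : ℕ → Finset ℕ)
    (hK2 : 2 ≤ K) (hKn : K < n)
    -- the performance and volatility parameters
    (α β : ℝ) (hα : 0 < α) (hβ : 0 < β)
    -- constants of the construction
    (k P q B m f : ℕ) (hk : k = K)
    (hP : P = max (2 * (k + 1)) (2 * s))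
    (hq : (q : ℤ) = ⌈max (1 + 4 / β) (Real.log (2 / α) / Real.log k)⌉)
    (hB : (B : ℤ) = ⌈α * (k : ℝ) ^ q⌉)
    (hm : m = n * B) (hf : f = P + s)
    (v₁ v₂ : ℝ) (hv₁ : v₁ = (B : ℝ) - 1) (hv₂ : v₂ = (k : ℝ) * ((B : ℝ) - 1))
    -- the constructed prices
    (Sp : ℕ → ℕ → ℝ)
    (h0 : ∀ i ∈ Finset.Icc 1 m, Sp i 0 = v₁)
    (hpad1 : ∀ t, 1 ≤ t → t ≤ P → ∀ i ∈ Finset.Icc 1 n, Sp i t = v₁)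
    (hpadEven : ∀ t, 1 ≤ t → t ≤ P → t % 2 = 0 →
      Sp (min (n + t / 2) m) t =
        ((m : ℝ) - n) * ((⌊(B : ℝ) / α⌋ : ℤ) - 1) ∧
      ∀ i, n < i → i ≤ m → i ≠ min (n + t / 2) m → Sp i t = 0)
    (hpadOdd : ∀ t, 1 ≤ t → t ≤ P → t % 2 = 1 →
      ∀ i, n < i → i ≤ m → Sp i t = 0)
    (hcode : ∀ t, P < t → t ≤ f →
      (∀ i ∈ Finset.Icc 1 n, Sp i t = if t - P ∈ C i then v₂ else 0) ∧
      (∀ i, n < i → i < m → Sp i t = 0) ∧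
      Sp m t = ((m : ℝ) - n) * ((⌊(B : ℝ) / α⌋ : ℤ) - (k : ℝ)) +
        (((Finset.Icc 1 n).filter (fun i => t - P ∉ C i)).card : ℝ) * v₂) :
    -- statement 8
    (∃ I ⊆ Finset.Icc 1 n, I.card ≤ K ∧
        ∀ j ∈ Finset.Icc 1 s, ∃ i ∈ I, j ∈ C i) ↔
      (∃ T ⊆ Finset.Icc 1 m, T.card = k ∧
        (∀ t ∈ Finset.Icc 1 f,
          phi1 Sp T t / phi1 Sp T 0 ≥
            α * (phi1 Sp (Finset.Icc 1 m) t / phi1 Sp (Finset.Icc 1 m) 0)) ∧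
        (∀ t ∈ Finset.Icc 2 f,
          vol Sp T t ≤ β * vol Sp (Finset.Icc 1 m) t)) := by
  subst hk hf hv₁ hv₂
  obtain ⟨hB1, hD, hαD, hkey, hβD⟩ := reduction_constants hα hβ hK2 hq hB
  have h : IsCoverMarket C s n k P B m ⌊(B : ℝ) / α⌋ Sp :=
    ⟨by omega, hKn, hB1, hm, hP, h0, hpad1, hpadEven, hpadOdd, hcode⟩
  exact h.exists_cover_iff hα hβ.le hD hαD hkey hβD

theorem stmt_8
    -- the minimum-cover instance
    (s n K : ℕ) (hs : 1 ≤ s) (C : ℕ → Finset ℕ)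
    (hC : ∀ i ∈ Finset.Icc 1 n, C i ⊆ Finset.Icc 1 s)
    (hK2 : 2 ≤ K) (hKn : K < n)
    -- the performance and volatility parameters
    (α β : ℝ) (hα : 0 < α) (hβ : 0 < β)
    -- constants of the construction
    (k P q B m f : ℕ) (hk : k = K)
    (hP : P = max (2 * (k + 1)) (2 * s))
    (hq : (q : ℤ) = ⌈max (1 + 4 / β) (Real.log (2 / α) / Real.log k)⌉)
    (hB : (B : ℤ) = ⌈α * (k : ℝ) ^ q⌉)
    (hm : m = n * B) (hf : f = P + s)
    (v₁ v₂ : ℝ) (hv₁ : v₁ = (B : ℝ) - 1) (hv₂ : v₂ = (k : ℝ) * ((B : ℝ) - 1))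
    -- the constructed prices
    (Sp : ℕ → ℕ → ℝ)
    (h0 : ∀ i ∈ Finset.Icc 1 m, Sp i 0 = v₁)
    (hpad1 : ∀ t, 1 ≤ t → t ≤ P → ∀ i ∈ Finset.Icc 1 n, Sp i t = v₁)
    (hpadEven : ∀ t, 1 ≤ t → t ≤ P → t % 2 = 0 →
      Sp (min (n + t / 2) m) t =
        ((m : ℝ) - n) * ((⌊(B : ℝ) / α⌋ : ℤ) - 1) ∧
      ∀ i, n < i → i ≤ m → i ≠ min (n + t / 2) m → Sp i t = 0)
    (hpadOdd : ∀ t, 1 ≤ t → t ≤ P → t % 2 = 1 →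
      ∀ i, n < i → i ≤ m → Sp i t = 0)
    (hcode : ∀ t, P < t → t ≤ f →
      (∀ i ∈ Finset.Icc 1 n, Sp i t = if t - P ∈ C i then v₂ else 0) ∧
      (∀ i, n < i → i < m → Sp i t = 0) ∧
      Sp m t = ((m : ℝ) - n) * ((⌊(B : ℝ) / α⌋ : ℤ) - (k : ℝ)) +
        (((Finset.Icc 1 n).filter (fun i => t - P ∉ C i)).card : ℝ) * v₂) :
    -- statement 8
    (∃ I ⊆ Finset.Icc 1 n, I.card ≤ K ∧
        ∀ j ∈ Finset.Icc 1 s, ∃ i ∈ I, j ∈ C i) ↔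
      (∃ T ⊆ Finset.Icc 1 m, T.card = k ∧
        (∀ t ∈ Finset.Icc 1 f,
          phi1 Sp T t / phi1 Sp T 0 ≥
            α * (phi1 Sp (Finset.Icc 1 m) t / phi1 Sp (Finset.Icc 1 m) 0)) ∧
        (∀ t ∈ Finset.Icc 2 f,
          vol Sp T t ≤ β * vol Sp (Finset.Icc 1 m) t)) :=
  stmt_8_general s n K C hK2 hKn α β hα hβ k P q B m f hk hP hq hB hm hf v₁ v₂ hv₁ hv₂ Sp h0 hpad1
    hpadEven hpadOdd hcode
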